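/- arXiv:1505.02744 — 2 statements merged into one kernel-verified Lean document; each statement's English description precedes it below -/
import Mathlib

section
/- Let R = {b₁, …, b_r} be a reasonable set and H_k = {h₁, …, h_k} an admissible set compatible with R, with K = (r+1)k+1. Let D₀ ≥ K be a real number and set W₁ = ∏_{p ≤ K} p² · ∏_{K < p ≤ D₀} p (products over primes). Then there exists an integer ν₀ such that: gcd(ν₀ + h_m, W₁) = 1 for m = 1, …, k; p² ∤ ν₀ + h_m − b_ℓ for every prime p ≤ K and all 1 ≤ ℓ ≤ r, 1 ≤ m ≤ k; and p ∤ ν₀ + h_m − b_ℓ for every prime p with K < p ≤ D₀ and all 1 ≤ ℓ ≤ r, 1 ≤ m ≤ k. -/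
open Finset

/-- A tuple of nonzero integers is *reasonable* if for every prime `p` there is
an integer `v` not divisible by `p` with `b ℓ ≢ v (mod p²)` for all `ℓ`. -/
def Reasonable {r : ℕ} (b : Fin r → ℤ) : Prop :=
  ∀ p : ℕ, p.Prime → ∃ v : ℤ, ¬ (p : ℤ) ∣ v ∧ ∀ ℓ, ¬ ((p : ℤ) ^ 2 ∣ b ℓ - v)

/-- A tuple `0 ≤ h 0 < h 1 < ⋯` of integers is *admissible* if for every prime `p`
some residue class `v (mod p)` avoids all the `h i`. -/
def AdmissibleTuple {k : ℕ} (h : Fin k → ℤ) : Prop :=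
  (∀ i, 0 ≤ h i) ∧ StrictMono h ∧
    ∀ p : ℕ, p.Prime → ∃ v : ℤ, ∀ i, ¬ ((p : ℤ) ∣ h i - v)

/-- The product of the primes `< K`. -/
def primorialLT (K : ℕ) : ℕ := ∏ p ∈ (Finset.range K).filter Nat.Prime, p

/-- An admissible tuple `h` is *compatible* with the reasonable tuple `b` if, with
`K = (r+1)k+1` and `P = ∏_{p < K} p`, one has `P² ∣ h m` for all `m` and
`h i - h j + b ℓ ≠ 0` for all `i, j, ℓ`. -/
def CompatibleWith {r k : ℕ} (b : Fin r → ℤ) (h : Fin k → ℤ) : Prop :=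
  (∀ m, ((primorialLT ((r + 1) * k + 1) : ℤ)) ^ 2 ∣ h m) ∧
    ∀ i j ℓ, h i - h j + b ℓ ≠ 0

/-! By the Chinese remainder theorem it suffices to find, for each prime `p`, one residue class
modulo `p²` satisfying the conditions at `p`. For `p < K` compatibility gives `p² ∣ h m`, so the
class `v` provided by reasonableness works. For `p ≥ K` the conditions only forbid the classes
`-h m` and `b ℓ - h m` modulo `p`, at most `k + rk < K ≤ p` of them, so one class survives. -/

theorem exists_forall_dvd_sub_of_pairwise_isCoprime {ι : Type*} [Finite ι] {n : ι → ℤ}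
    (hn : Pairwise fun i j ↦ IsCoprime (n i) (n j)) (a : ι → ℤ) : ∃ x : ℤ, ∀ i, n i ∣ x - a i := by
  have hI : Pairwise fun i j ↦ IsCoprime (Ideal.span {n i}) (Ideal.span {n j}) := fun i j hij ↦
    (Ideal.isCoprime_span_singleton_iff _ _).mpr (hn hij)
  obtain ⟨x, hx⟩ := Ideal.exists_forall_sub_mem_ideal hI a
  exact ⟨x, fun i ↦ Ideal.mem_span_singleton.mp (hx i)⟩

theorem exists_forall_not_dvd_sub_of_card_lt {n : ℕ} (S : Finset ℤ) (hS : #S < n) :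
    ∃ x : ℤ, ∀ s ∈ S, ¬ (n : ℤ) ∣ x - s := by
  have : NeZero n := ⟨by omega⟩
  have hcard : #(S.image ((↑) : ℤ → ZMod n)) < Fintype.card (ZMod n) :=
    card_image_le.trans_lt (by rwa [ZMod.card])
  obtain ⟨y, -, hy⟩ := exists_mem_notMem_of_card_lt_card hcard
  refine ⟨y.cast, fun s hs hdvd ↦ hy (mem_image.mpr ⟨s, hs, ?_⟩)⟩
  rw [← ZMod.intCast_zmod_cast y]
  exact (ZMod.intCast_eq_intCast_iff_dvd_sub _ _ _).mpr hdvd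

section Residues

variable {ι κ : Type*}

theorem not_dvd_add_and_not_sq_dvd_of_sq_dvd {R : Type*} [CommRing R] {p v : R}
    {b : ι → R} {h : κ → R} (hv : ¬ p ∣ v) (hb : ∀ ℓ, ¬ p ^ 2 ∣ b ℓ - v)
    (hh : ∀ m, p ^ 2 ∣ h m) :
    (∀ m, ¬ p ∣ v + h m) ∧ ∀ ℓ m, ¬ p ^ 2 ∣ v + h m - b ℓ := by
  refine ⟨fun m hdvd ↦ hv ?_, fun ℓ m hdvd ↦ hb ℓ ?_⟩
  · exact (dvd_add_left ((dvd_pow_self p two_ne_zero).trans (hh m))).mp hdvd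
  · rw [← sub_add_eq_add_sub, dvd_add_left (hh m)] at hdvd
    exact dvd_sub_comm.mp hdvd

theorem exists_forall_not_dvd_add_and_not_dvd_add_sub [Fintype ι] [Fintype κ]
    (b : ι → ℤ) (h : κ → ℤ) {p : ℕ}
    (hp : Fintype.card κ + Fintype.card ι * Fintype.card κ < p) :
    ∃ ν : ℤ, (∀ m, ¬ (p : ℤ) ∣ ν + h m) ∧ ∀ ℓ m, ¬ (p : ℤ) ∣ ν + h m - b ℓ := by
  classical
  let S := univ.image (fun m ↦ -h m) ∪ univ.image (fun x : ι × κ ↦ b x.1 - h x.2)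
  have hS : #S < p := by
    refine (card_union_le _ _).trans_lt (lt_of_le_of_lt (add_le_add card_image_le card_image_le) ?_)
    simpa only [card_univ, Fintype.card_prod] using hp
  obtain ⟨ν, hν⟩ := exists_forall_not_dvd_sub_of_card_lt S hS
  refine ⟨ν, fun m ↦ ?_, fun ℓ m ↦ ?_⟩
  · simpa [sub_neg_eq_add] using hν (-h m) (mem_union_left _ (mem_image_of_mem _ (mem_univ m)))
  · have := hν (b ℓ - h m) (mem_union_right _ (mem_image_of_mem _ (mem_univ (ℓ, m))))
    rwa [sub_sub_eq_add_sub] at this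

end Residues

section GoodResidue

variable {r k : ℕ} {b : Fin r → ℤ} {h : Fin k → ℤ}

variable (b h) in
def GoodResidue (p : ℕ) (ν : ℤ) : Prop :=
  (∀ m, ¬ (p : ℤ) ∣ ν + h m) ∧ (∀ ℓ m, ¬ (p : ℤ) ^ 2 ∣ ν + h m - b ℓ) ∧
    ((r + 1) * k + 1 < p → ∀ ℓ m, ¬ (p : ℤ) ∣ ν + h m - b ℓ)

theorem GoodResidue.of_sq_dvd_sub {p : ℕ} {a ν : ℤ} (ha : GoodResidue b h p a)
    (hν : (p : ℤ) ^ 2 ∣ ν - a) : GoodResidue b h p ν := by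
  have hν' : (p : ℤ) ∣ ν - a := (dvd_pow_self _ two_ne_zero).trans hν
  have key : ∀ {d : ℤ}, d ∣ ν - a → ∀ c, d ∣ ν + c ↔ d ∣ a + c := fun hd c ↦
    dvd_iff_dvd_of_dvd_sub (by rwa [add_sub_add_right_eq_sub])
  simp only [GoodResidue, add_sub_assoc] at ha ⊢
  obtain ⟨h₁, h₂, h₃⟩ := ha
  exact ⟨fun m ↦ (key hν' _).not.mpr (h₁ m), fun ℓ m ↦ (key hν _).not.mpr (h₂ ℓ m),
    fun hp ℓ m ↦ (key hν' _).not.mpr (h₃ hp ℓ m)⟩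

theorem exists_goodResidue (hR : Reasonable b) (hcomp : CompatibleWith b h) {p : ℕ}
    (hp : p.Prime) : ∃ ν, GoodResidue b h p ν := by
  by_cases hpK : p < (r + 1) * k + 1
  · obtain ⟨v, hv, hvb⟩ := hR p hp
    have hpP : (p : ℤ) ∣ primorialLT ((r + 1) * k + 1) := Int.natCast_dvd_natCast.mpr
      (dvd_prod_of_mem _ (mem_filter.mpr ⟨mem_range.mpr hpK, hp⟩))
    have hh : ∀ m, (p : ℤ) ^ 2 ∣ h m := fun m ↦ (pow_dvd_pow_of_dvd hpP 2).trans (hcomp.1 m)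
    obtain ⟨h₁, h₂⟩ := not_dvd_add_and_not_sq_dvd_of_sq_dvd hv hvb hh
    exact ⟨v, h₁, h₂, fun hKp ↦ absurd hKp (by omega)⟩
  · obtain ⟨ν, h₁, h₃⟩ := exists_forall_not_dvd_add_and_not_dvd_add_sub b h (p := p)
      (by simp only [Fintype.card_fin]; linarith)
    exact ⟨ν, h₁, fun ℓ m hd ↦ h₃ ℓ m ((dvd_pow_self _ two_ne_zero).trans hd), fun _ ↦ h₃⟩

theorem exists_forall_goodResidue (hR : Reasonable b) (hcomp : CompatibleWith b h) (M : ℕ) :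
    ∃ ν, ∀ p, p.Prime → p ≤ M → GoodResidue b h p ν := by
  let ι := {p : ℕ // p.Prime ∧ p ≤ M}
  have : Finite ι := (Set.finite_Iic M).subset (fun _ hp ↦ hp.2) |>.to_subtype
  choose a ha using fun p : ι ↦ exists_goodResidue hR hcomp p.2.1
  have hcop : Pairwise fun p q : ι ↦ IsCoprime ((p : ℤ) ^ 2) ((q : ℤ) ^ 2) := fun p q hpq ↦
    (Nat.isCoprime_iff_coprime.mpr
      ((Nat.coprime_primes p.2.1 q.2.1).mpr (Subtype.coe_injective.ne hpq))).pow
  obtain ⟨ν, hν⟩ := exists_forall_dvd_sub_of_pairwise_isCoprime hcop a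
  exact ⟨ν, fun p hp hpM ↦ (ha ⟨p, hp, hpM⟩).of_sq_dvd_sub (hν ⟨p, hp, hpM⟩)⟩

end GoodResidue

theorem exists_nu0_general (r k : ℕ) (b : Fin r → ℤ) (h : Fin k → ℤ)
    (hR : Reasonable b)
    (hcomp : CompatibleWith b h)
    (D₀ : ℝ) :
    ∃ ν₀ : ℤ,
      (∀ m : Fin k,
        IsCoprime (ν₀ + h m)
          (((∏ p ∈ (Finset.range ((r + 1) * k + 1 + 1)).filter Nat.Prime, p ^ 2) *
            ∏ p ∈ (Finset.range (⌊D₀⌋₊ + 1)).filter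
              (fun p => p.Prime ∧ (r + 1) * k + 1 < p), p : ℕ) : ℤ)) ∧
      (∀ p : ℕ, p.Prime → p ≤ (r + 1) * k + 1 →
        ∀ (ℓ : Fin r) (m : Fin k), ¬ ((p : ℤ) ^ 2 ∣ ν₀ + h m - b ℓ)) ∧
      (∀ p : ℕ, p.Prime → (r + 1) * k + 1 < p → (p : ℝ) ≤ D₀ →
        ∀ (ℓ : Fin r) (m : Fin k), ¬ ((p : ℤ) ∣ ν₀ + h m - b ℓ)) := by
  obtain ⟨ν₀, hν₀⟩ := exists_forall_goodResidue hR hcomp ((r + 1) * k + 1 + ⌊D₀⌋₊)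
  have hcop : ∀ m p, p.Prime → p ≤ (r + 1) * k + 1 + ⌊D₀⌋₊ → IsCoprime (ν₀ + h m) p :=
    fun m p hp hpM ↦ ((Prime.coprime_iff_not_dvd (Nat.prime_iff_prime_int.mp hp)).mpr
      ((hν₀ p hp hpM).1 m)).symm
  refine ⟨ν₀, fun m ↦ ?_, fun p hp hpK ↦ (hν₀ p hp (by omega)).2.1,
    fun p hp hKp hpD ↦ (hν₀ p hp (by have := Nat.le_floor hpD; omega)).2.2 hKp⟩
  push_cast
  refine (IsCoprime.prod_right fun p hp ↦ ?_).mul_right (IsCoprime.prod_right fun p hp ↦ ?_)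
  · obtain ⟨hpK, hp⟩ := mem_filter.mp hp
    exact (hcop m p hp (by have := mem_range.mp hpK; omega)).pow_right
  · obtain ⟨hpD, hp, -⟩ := mem_filter.mp hp
    exact hcop m p hp (by have := mem_range.mp hpD; omega)

/-- Existence of the residue `ν₀`: with `K = (r+1)k+1 ≤ D₀` and
`W₁ = ∏_{p ≤ K} p² ∏_{K < p ≤ D₀} p`, there is an integer `ν₀` with
`(ν₀ + h m, W₁) = 1` for all `m`, `p² ∤ ν₀ + h m - b ℓ` for all primes `p ≤ K`,
and `p ∤ ν₀ + h m - b ℓ` for all primes `K < p ≤ D₀`. -/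
theorem exists_nu0 (r k : ℕ) (b : Fin r → ℤ) (h : Fin k → ℤ)
    (hb : ∀ ℓ, b ℓ ≠ 0) (hR : Reasonable b)
    (hadm : AdmissibleTuple h) (hcomp : CompatibleWith b h)
    (D₀ : ℝ) (hD₀ : ((r + 1) * k + 1 : ℕ) ≤ D₀) :
    ∃ ν₀ : ℤ,
      (∀ m : Fin k,
        IsCoprime (ν₀ + h m)
          (((∏ p ∈ (Finset.range ((r + 1) * k + 1 + 1)).filter Nat.Prime, p ^ 2) *
            ∏ p ∈ (Finset.range (⌊D₀⌋₊ + 1)).filter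
              (fun p => p.Prime ∧ (r + 1) * k + 1 < p), p : ℕ) : ℤ)) ∧
      (∀ p : ℕ, p.Prime → p ≤ (r + 1) * k + 1 →
        ∀ (ℓ : Fin r) (m : Fin k), ¬ ((p : ℤ) ^ 2 ∣ ν₀ + h m - b ℓ)) ∧
      (∀ p : ℕ, p.Prime → (r + 1) * k + 1 < p → (p : ℝ) ≤ D₀ →
        ∀ (ℓ : Fin r) (m : Fin k), ¬ ((p : ℤ) ∣ ν₀ + h m - b ℓ)) :=
  exists_nu0_general r k b h hR hcomp D₀
end

section
/- There is a positive absolute constant C such that the following holds. Let R = {b₁, …, b_r} be a reasonable set and k a positive integer. Then there exists an admissible set H_k = {h₁, …, h_k} of k integers that is compatible with R and satisfies h_k − h₁ ≤ exp(C k r). -/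
open Finset

/-!
Take `h i = i · t · P²`. Every prime `p < K` divides all `h i`, and a prime `p ≥ K > k` cannot
meet all `p` residue classes with only `k` numbers, so `h` is admissible. The relation
`h i - h j + b ℓ = 0` reads `t · ((i - j) P²) = -b ℓ`; as `b ℓ ≠ 0`, each of the `r (2k + 1)`
choices of `(ℓ, i - j)` forbids at most one `t`, so some `t ≤ r (2k + 1) + 1` works. The
diameter is then at most `k t P² ≤ exp (C k r)` by the bound `∏_{p ≤ n} p ≤ 4ⁿ`.
-/

lemma exists_avoided_residue_of_card_lt {k p : ℕ} (h : Fin k → ℤ) (hkp : k < p) :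
    ∃ v : ℤ, ∀ i, ¬ (p : ℤ) ∣ h i - v := by
  have hcard : #(univ.image fun i => h i % p) < #(Ico (0 : ℤ) p) := by
    rw [Int.card_Ico, sub_zero, Int.toNat_natCast]
    exact card_image_le.trans_lt (by simpa using hkp)
  obtain ⟨v, hv, hvh⟩ := exists_mem_notMem_of_card_lt_card hcard
  obtain ⟨hv0, hvp⟩ := mem_Ico.1 hv
  refine ⟨v, fun i hdvd => hvh (mem_image.2 ⟨i, mem_univ _, ?_⟩)⟩
  rw [← (Int.modEq_iff_dvd.2 hdvd).eq, Int.emod_eq_of_lt hv0 hvp]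

lemma admissibleTuple_mul {k : ℕ} {d : ℤ} (hd : 0 < d)
    (hdvd : ∀ p : ℕ, p.Prime → p ≤ k → (p : ℤ) ∣ d) :
    AdmissibleTuple fun i : Fin k => (i : ℤ) * d := by
  refine ⟨fun i => by positivity,
    fun i j hij => mul_lt_mul_of_pos_right (by exact_mod_cast hij) hd, fun p hp => ?_⟩
  rcases le_or_gt p k with hpk | hkp
  · refine ⟨1, fun i hi => hp.one_lt.ne' ?_⟩
    have hp1 : (p : ℤ) ∣ 1 := by
      simpa using dvd_sub ((hdvd p hp hpk).mul_left (i : ℤ)) hi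
    exact_mod_cast Int.eq_one_of_dvd_one (by positivity) hp1
  · exact exists_avoided_residue_of_card_lt _ hkp

lemma dvd_primorialLT {p K : ℕ} (hp : p.Prime) (hpK : p < K) : p ∣ primorialLT K :=
  dvd_prod_of_mem _ (mem_filter.2 ⟨mem_range.2 hpK, hp⟩)

lemma primorialLT_succ_le_four_pow (n : ℕ) : primorialLT (n + 1) ≤ 4 ^ n :=
  primorial_le_four_pow n

lemma exists_mem_Icc_mul_add_ne_zero {ι : Type*} [Fintype ι] (b : ι → ℤ) (hb : ∀ ℓ, b ℓ ≠ 0)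
    (D : Finset ℤ) :
    ∃ t ∈ Icc (1 : ℤ) (Fintype.card ι * #D + 1), ∀ ℓ, ∀ d ∈ D, t * d + b ℓ ≠ 0 := by
  set forbidden := (univ ×ˢ D).image fun q : ι × ℤ => -b q.1 / q.2
  have hcard : #forbidden < #(Icc (1 : ℤ) (Fintype.card ι * #D + 1)) := by
    rw [Int.card_Icc, add_sub_cancel_right]
    norm_cast
    exact card_image_le.trans_lt (by simp)
  obtain ⟨t, ht, htf⟩ := exists_mem_notMem_of_card_lt_card hcard
  refine ⟨t, ht, fun ℓ d hd hzero => htf (mem_image.2 ⟨(ℓ, d), mem_product.2 ⟨mem_univ _, hd⟩, ?_⟩)⟩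
  have hd0 : d ≠ 0 := by rintro rfl; exact hb ℓ (by simpa using hzero)
  exact Int.ediv_eq_of_eq_mul_left hd0 (by linear_combination -hzero)

lemma mul_mul_primorialLT_sq_le_four_pow {r k : ℕ} (hr : 1 ≤ r) (hk : 1 ≤ k) :
    k * (r * (2 * k + 1) + 1) * primorialLT ((r + 1) * k + 1) ^ 2 ≤ 4 ^ (8 * k * r) := by
  have hk4 : k < 4 ^ k := Nat.lt_pow_self (by norm_num)
  have hr4 : r < 4 ^ r := Nat.lt_pow_self (by norm_num)
  have hfactor : k * (r * (2 * k + 1) + 1) ≤ 4 ^ (1 + 2 * k + r) :=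
    calc k * (r * (2 * k + 1) + 1) ≤ 4 * k * k * r := by
          nlinarith [Nat.mul_le_mul_right (k * r) hk, Nat.mul_le_mul_right k (Nat.mul_le_mul hk hr)]
      _ ≤ 4 * 4 ^ k * 4 ^ k * 4 ^ r := by gcongr
      _ = 4 ^ (1 + 2 * k + r) := by ring
  have hprimorial : primorialLT ((r + 1) * k + 1) ^ 2 ≤ 4 ^ (2 * ((r + 1) * k)) := by
    rw [pow_mul']
    exact Nat.pow_le_pow_left (primorialLT_succ_le_four_pow _) 2
  calc k * (r * (2 * k + 1) + 1) * primorialLT ((r + 1) * k + 1) ^ 2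
      ≤ 4 ^ (1 + 2 * k + r) * 4 ^ (2 * ((r + 1) * k)) := Nat.mul_le_mul hfactor hprimorial
    _ = 4 ^ (1 + 2 * k + r + 2 * ((r + 1) * k)) := (pow_add _ _ _).symm
    _ ≤ 4 ^ (8 * k * r) := Nat.pow_le_pow_right (by norm_num) (by nlinarith)

lemma four_pow_le_exp (n : ℕ) : (4 : ℝ) ^ n ≤ Real.exp (2 * n) := by
  have h4 : (4 : ℝ) ≤ Real.exp 2 := by
    have he : Real.exp 2 = Real.exp 1 * Real.exp 1 := by rw [← Real.exp_add]; norm_num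
    nlinarith [Real.exp_one_gt_d9]
  calc (4 : ℝ) ^ n ≤ Real.exp 2 ^ n := pow_le_pow_left₀ (by norm_num) h4 n
    _ = Real.exp (2 * n) := by rw [mul_comm, Real.exp_nat_mul]

lemma mul_mul_primorialLT_sq_le_exp {r k : ℕ} (hr : 1 ≤ r) (hk : 1 ≤ k) :
    (k * (r * (2 * k + 1) + 1) * primorialLT ((r + 1) * k + 1) ^ 2 : ℝ) ≤
      Real.exp (16 * k * r) :=
  calc (k * (r * (2 * k + 1) + 1) * primorialLT ((r + 1) * k + 1) ^ 2 : ℝ)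
      ≤ (4 : ℝ) ^ (8 * k * r) := by exact_mod_cast mul_mul_primorialLT_sq_le_four_pow hr hk
    _ ≤ Real.exp (16 * k * r) := by
        convert four_pow_le_exp (8 * k * r) using 2; push_cast; ring

lemma fin_val_mul_sub_mul_le {k : ℕ} {d : ℤ} (hd : 0 ≤ d) (i j : Fin k) :
    (i : ℤ) * d - j * d ≤ k * d := by
  rw [← sub_mul]
  exact mul_le_mul_of_nonneg_right (by omega) hd

/-- There is an absolute constant `C > 0` so that for every reasonable tuple
`b₁, …, b_r` (`r ≥ 1`) and every `k ≥ 1` there is an admissible `k`-tuple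
compatible with it whose diameter is at most `exp(C k r)`. -/
theorem exists_compatible_admissible_tuple :
    ∃ C : ℝ, 0 < C ∧
      ∀ (r k : ℕ), 1 ≤ r → 1 ≤ k →
        ∀ b : Fin r → ℤ, (∀ ℓ, b ℓ ≠ 0) → Reasonable b →
          ∃ h : Fin k → ℤ, AdmissibleTuple h ∧ CompatibleWith b h ∧
            ∀ i j : Fin k, ((h i - h j : ℤ) : ℝ) ≤ Real.exp (C * k * r) := by
  refine ⟨16, by norm_num, fun r k hr hk b hb _ => ?_⟩
  set P : ℤ := ↑(primorialLT ((r + 1) * k + 1))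
  have hP : 0 < P := Int.natCast_pos.2 (primorial_pos _)
  obtain ⟨t, ht, hgood⟩ :=
    exists_mem_Icc_mul_add_ne_zero b hb ((Icc (-(k : ℤ)) k).image (· * P ^ 2))
  have hD : #((Icc (-(k : ℤ)) k).image (· * P ^ 2)) ≤ 2 * k + 1 :=
    card_image_le.trans (by rw [Int.card_Icc]; omega)
  rw [Fintype.card_fin] at ht
  obtain ⟨ht1, htN⟩ := mem_Icc.1 ht
  have htB : t ≤ r * (2 * k + 1) + 1 := htN.trans (by gcongr; exact_mod_cast hD)
  refine ⟨fun i => (i : ℤ) * (t * P ^ 2), admissibleTuple_mul (by positivity) fun p hp hpk => ?_,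
    ⟨fun m => ⟨m * t, by ring⟩, fun i j ℓ => ?_⟩, fun i j => ?_⟩
  · have hpP : (p : ℤ) ∣ P := Int.natCast_dvd_natCast.2 (dvd_primorialLT hp (by nlinarith))
    exact (hpP.trans (dvd_pow_self P two_ne_zero)).mul_left t
  · have hij : (i : ℤ) - j ∈ Icc (-(k : ℤ)) k := mem_Icc.2 ⟨by omega, by omega⟩
    convert hgood ℓ _ (mem_image_of_mem (· * P ^ 2) hij) using 1
    ring
  · calc _ ≤ ((k * (t * P ^ 2) : ℤ) : ℝ) := by
          exact_mod_cast fin_val_mul_sub_mul_le (by positivity) i j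
      _ ≤ k * (r * (2 * k + 1) + 1) * primorialLT ((r + 1) * k + 1) ^ 2 := by
          have htB' : (t : ℝ) ≤ r * (2 * k + 1) + 1 := by exact_mod_cast htB
          push_cast [P]
          rw [mul_assoc]
          gcongr
      _ ≤ Real.exp (16 * k * r) := mul_mul_primorialLT_sq_le_exp hr hk
end
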